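/- Let h > 0. Let U and V be measurable spaces carrying finite measures μ and ν and measurable symmetric functions r_U : U × U → ℝ and r_V : V × V → ℝ. On the disjoint union X = U ⊕ V define the h-concatenation r by r = r_U on U × U, r = r_V on V × V, and r(x,y) = 2h whenever x and y lie in different summands; let κ be the measure on X given by the sum of the pushforwards of μ and ν under the two inclusions. Let n ≥ 1 and let F : Xⁿ → ℝ be a bounded measurable function such that F(x₁,…,xₙ) = 0 whenever r(x_i, x_j) ≥ 2h for some pair i ≠ j. Then ∫_{Xⁿ} F dκ^{⊗n} = ∫_{Uⁿ} F(inl(y₁),…,inl(yₙ)) dμ^{⊗n} + ∫_{Vⁿ} F(inr(z₁),…,inr(zₙ)) dν^{⊗n}. -/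

import Mathlib

/-!
An `n`-sample from `μ.map Sum.inl + ν.map Sum.inr` either lies entirely in `U`, entirely in `V`,
or is mixed. A mixed sample has two coordinates in different summands, at distance `2h`, so the
integrand vanishes there. On the pure `U`-samples the product measure restricts to the
pushforward of `μ^{⊗n}` under `Sum.inl`, and likewise for `V`.
-/

open MeasureTheory

/-- The `h`-concatenation of two distance functions on the disjoint union:
original distances within each summand, all cross-distances equal to `2h`. -/
def hConcat {U V : Type*} (h : ℝ) (rU : U → U → ℝ) (rV : V → V → ℝ) :
    U ⊕ V → U ⊕ V → ℝ
  | Sum.inl a, Sum.inl b => rU a b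
  | Sum.inr a, Sum.inr b => rV a b
  | _, _ => 2 * h

open Set

namespace MeasureTheory.Measure

variable {α β : Type*} [MeasurableSpace α] [MeasurableSpace β] (μ : Measure α) (ν : Measure β)

lemma restrict_range_inl_map_inl_add_map_inr :
    (μ.map Sum.inl + ν.map Sum.inr).restrict (range Sum.inl) = μ.map Sum.inl := by
  rw [restrict_add, restrict_map measurable_inl measurableSet_range_inl,
    restrict_map measurable_inr measurableSet_range_inl]
  simp

lemma restrict_range_inr_map_inl_add_map_inr :
    (μ.map Sum.inl + ν.map Sum.inr).restrict (range Sum.inr) = ν.map Sum.inr := by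
  rw [restrict_add, restrict_map measurable_inl measurableSet_range_inr,
    restrict_map measurable_inr measurableSet_range_inr]
  simp

end MeasureTheory.Measure

namespace MeasureTheory

variable {ι α β : Type*} [Fintype ι] [MeasurableSpace α] [MeasurableSpace β]
  {μ : Measure α} {ν : Measure β} [IsFiniteMeasure μ] [IsFiniteMeasure ν]
  {F : (ι → α ⊕ β) → ℝ}

lemma setIntegral_univ_pi_range_inl (hF : Measurable F) :
    ∫ x in univ.pi fun _ => range Sum.inl,
        F x ∂(Measure.pi fun _ : ι => μ.map Sum.inl + ν.map Sum.inr) =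
      ∫ y, F (fun i => Sum.inl (y i)) ∂Measure.pi fun _ : ι => μ := by
  rw [Measure.restrict_pi_pi, funext fun _ => Measure.restrict_range_inl_map_inl_add_map_inr μ ν,
    ← Measure.pi_map_pi fun _ => measurable_inl.aemeasurable]
  exact integral_map
    (measurable_pi_lambda _ fun i => measurable_inl.comp (measurable_pi_apply i)).aemeasurable
    hF.aestronglyMeasurable

lemma setIntegral_univ_pi_range_inr (hF : Measurable F) :
    ∫ x in univ.pi fun _ => range Sum.inr,
        F x ∂(Measure.pi fun _ : ι => μ.map Sum.inl + ν.map Sum.inr) =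
      ∫ z, F (fun i => Sum.inr (z i)) ∂Measure.pi fun _ : ι => ν := by
  rw [Measure.restrict_pi_pi, funext fun _ => Measure.restrict_range_inr_map_inl_add_map_inr μ ν,
    ← Measure.pi_map_pi fun _ => measurable_inr.aemeasurable]
  exact integral_map
    (measurable_pi_lambda _ fun i => measurable_inr.comp (measurable_pi_apply i)).aemeasurable
    hF.aestronglyMeasurable

lemma integral_pi_map_inl_add_map_inr [Nonempty ι] (hFm : Measurable F)
    (hFi : Integrable F (Measure.pi fun _ : ι => μ.map Sum.inl + ν.map Sum.inr))
    (hF : ∀ x i j, x i ∈ range Sum.inr → x j ∈ range Sum.inl → F x = 0) :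
    ∫ x, F x ∂Measure.pi (fun _ : ι => μ.map Sum.inl + ν.map Sum.inr) =
      (∫ y, F (fun i => Sum.inl (y i)) ∂Measure.pi fun _ : ι => μ) +
      ∫ z, F (fun i => Sum.inr (z i)) ∂Measure.pi fun _ : ι => ν := by
  have hdisj : Disjoint (univ.pi fun _ : ι => range (Sum.inl : α → α ⊕ β))
      (univ.pi fun _ => range Sum.inr) := by
    refine disjoint_left.2 fun x hl hr => ?_
    obtain ⟨i⟩ := ‹Nonempty ι›
    exact disjoint_left.1 isCompl_range_inl_range_inr.disjoint (hl i trivial) (hr i trivial)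
  have hvanish : ∀ x ∉ (univ.pi fun _ => range Sum.inl) ∪ univ.pi fun _ => range Sum.inr,
      F x = 0 := by
    intro x hx
    simp only [mem_union, mem_univ_pi, not_or, not_forall, ← mem_compl_iff,
      compl_range_inl, compl_range_inr] at hx
    obtain ⟨⟨i, hi⟩, j, hj⟩ := hx
    exact hF x i j hi hj
  rw [← setIntegral_eq_integral_of_forall_compl_eq_zero hvanish,
    setIntegral_union hdisj (.univ_pi fun _ => measurableSet_range_inr) hFi.integrableOn
      hFi.integrableOn, setIntegral_univ_pi_range_inl hFm, setIntegral_univ_pi_range_inr hFm]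

end MeasureTheory

theorem truncated_polynomial_additive_on_concatenation_general
    {U V : Type*} [MeasurableSpace U] [MeasurableSpace V]
    (μ : Measure U) (ν : Measure V) [IsFiniteMeasure μ] [IsFiniteMeasure ν]
    (rU : U → U → ℝ) (rV : V → V → ℝ)
    (h : ℝ)
    (n : ℕ) (hn : 1 ≤ n)
    (F : (Fin n → U ⊕ V) → ℝ)
    (hFm : Measurable F) (hFb : ∃ C : ℝ, ∀ x, |F x| ≤ C)
    (hF0 : ∀ x : Fin n → U ⊕ V,
      (∃ i j : Fin n, i ≠ j ∧ 2 * h ≤ hConcat h rU rV (x i) (x j)) → F x = 0) :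
    ∫ x, F x ∂(Measure.pi fun _ : Fin n => (μ.map Sum.inl + ν.map Sum.inr)) =
      (∫ y, F (fun i => Sum.inl (y i)) ∂(Measure.pi fun _ : Fin n => μ)) +
      (∫ z, F (fun i => Sum.inr (z i)) ∂(Measure.pi fun _ : Fin n => ν)) := by
  have : Nonempty (Fin n) := ⟨⟨0, hn⟩⟩
  obtain ⟨C, hC⟩ := hFb
  refine integral_pi_map_inl_add_map_inr hFm
    (.of_bound hFm.aestronglyMeasurable C (.of_forall hC)) ?_
  rintro x i j ⟨b, hb⟩ ⟨a, ha⟩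
  have hij : i ≠ j := fun hij => Sum.inr_ne_inl (hb.trans (hij ▸ ha.symm))
  exact hF0 x ⟨i, j, hij, by rw [← hb, ← ha]; rfl⟩

/-- Additivity of `2h`-truncated polynomials on the `h`-concatenation: if a bounded
measurable integrand on `n`-samples vanishes whenever some pairwise distance is `≥ 2h`,
then its integral with respect to the `n`-fold product of the concatenated measure is the
sum of the integrals over the two summands, since mixed samples contribute zero. -/
theorem truncated_polynomial_additive_on_concatenation
    {U V : Type*} [MeasurableSpace U] [MeasurableSpace V]
    (μ : Measure U) (ν : Measure V) [IsFiniteMeasure μ] [IsFiniteMeasure ν]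
    (rU : U → U → ℝ) (rV : V → V → ℝ)
    (hrUm : Measurable (Function.uncurry rU)) (hrVm : Measurable (Function.uncurry rV))
    (hrUs : ∀ x y, rU x y = rU y x) (hrVs : ∀ x y, rV x y = rV y x)
    (h : ℝ) (hh : 0 < h)
    (n : ℕ) (hn : 1 ≤ n)
    (F : (Fin n → U ⊕ V) → ℝ)
    (hFm : Measurable F) (hFb : ∃ C : ℝ, ∀ x, |F x| ≤ C)
    (hF0 : ∀ x : Fin n → U ⊕ V,
      (∃ i j : Fin n, i ≠ j ∧ 2 * h ≤ hConcat h rU rV (x i) (x j)) → F x = 0) :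
    ∫ x, F x ∂(Measure.pi fun _ : Fin n => (μ.map Sum.inl + ν.map Sum.inr)) =
      (∫ y, F (fun i => Sum.inl (y i)) ∂(Measure.pi fun _ : Fin n => μ)) +
      (∫ z, F (fun i => Sum.inr (z i)) ∂(Measure.pi fun _ : Fin n => ν)) :=
  truncated_polynomial_additive_on_concatenation_general μ ν rU rV h n hn F hFm hFb hF0
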